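/- arXiv:2406.12530 — 5 statements merged into one kernel-verified Lean document; each statement's English description precedes it below -/
import Mathlib

section
/- Consider a discrete-time conewise linear system (CLS) satisfying the continuity assumption, and suppose that every solution exhibits a finite number of switches, i.e., ς(x) < ∞ for every x ∈ ℝ^n. Then the origin is globally exponentially stable for the CLS if and only if the origin is globally exponentially stable for the restriction of the CLS to the set F (i.e., for solutions initialized in F, which is forward invariant). -/
/-!
Every solution has finitely many switches, so from some time on it follows a single mode and
lies in `F`; exponential stability on `F` then makes every solution converge to `0`. The time-one
map of the system is continuous (it is linear on each cone of a finite closed cover) and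
positively homogeneous, so its orbits scale with the initial state. Compactness of the unit sphere
turns pointwise convergence into a uniform horizon `T` within which every state is at least
halved, and halving every `T` steps, with growth at most `L ^ T` in between, is exponential decay.
-/

open Filter Topology Finset

section Iteration

variable {E : Type*} [NormedAddCommGroup E]

theorem norm_iterate_le_pow_mul {f : E → E} {L : ℝ} (hL0 : 0 ≤ L) (hL : ∀ x, ‖f x‖ ≤ L * ‖x‖)
    (t : ℕ) (x : E) : ‖f^[t] x‖ ≤ L ^ t * ‖x‖ := by
  induction t with
  | zero => simp
  | succ t ih =>
    rw [Function.iterate_succ_apply', pow_succ', mul_assoc]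
    exact (hL _).trans (mul_le_mul_of_nonneg_left ih hL0)

theorem norm_iterate_le_of_forall_exists_halving {f : E → E} {L : ℝ} {T : ℕ} (hL1 : 1 ≤ L)
    (hL : ∀ x, ‖f x‖ ≤ L * ‖x‖) (hhalf : ∀ x, ∃ s ∈ Icc 1 T, ‖f^[s] x‖ ≤ ‖x‖ / 2) (t : ℕ) (x : E) :
    ‖f^[t] x‖ ≤ L ^ T * 2⁻¹ ^ (t / T) * ‖x‖ := by
  induction t using Nat.strong_induction_on generalizing x with
  | _ t ih =>
  rcases lt_or_ge t T with htT | hTt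
  · rw [Nat.div_eq_of_lt htT, pow_zero, mul_one]
    exact (norm_iterate_le_pow_mul (by linarith) hL t x).trans
      (mul_le_mul_of_nonneg_right (pow_le_pow_right₀ hL1 htT.le) (norm_nonneg x))
  obtain ⟨s, hs, hsx⟩ := hhalf x
  obtain ⟨hs1, hsT⟩ := mem_Icc.1 hs
  have hdiv : t / T ≤ (t - s) / T + 1 := by
    calc t / T = (t - T) / T + 1 := by
          rw [← Nat.add_div_right _ (by omega), Nat.sub_add_cancel hTt]
      _ ≤ (t - s) / T + 1 := by gcongr
  calc ‖f^[t] x‖ = ‖f^[t - s] (f^[s] x)‖ := by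
        rw [← Function.iterate_add_apply, Nat.sub_add_cancel (by omega)]
    _ ≤ L ^ T * 2⁻¹ ^ ((t - s) / T) * (‖x‖ / 2) :=
        (ih _ (by omega) _).trans (mul_le_mul_of_nonneg_left hsx (by positivity))
    _ = L ^ T * 2⁻¹ ^ ((t - s) / T + 1) * ‖x‖ := by ring
    _ ≤ L ^ T * 2⁻¹ ^ (t / T) * ‖x‖ := by
        have := pow_le_pow_of_le_one (a := (2 : ℝ)⁻¹) (by norm_num) (by norm_num) hdiv
        gcongr

theorem inv_two_pow_div_le_two_mul_exp {T : ℕ} (hT : 0 < T) (t : ℕ) :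
    (2⁻¹ : ℝ) ^ (t / T) ≤ 2 * Real.exp (-(Real.log 2 / T) * t) := by
  have hT' : (0 : ℝ) < T := Nat.cast_pos.2 hT
  have ht : (t : ℝ) ≤ ((t / T : ℕ) + 1) * T := by
    exact_mod_cast (Nat.lt_div_mul_add hT).le.trans_eq (by ring)
  rw [inv_pow, ← Real.exp_log (by norm_num : (0 : ℝ) < 2), ← Real.exp_nat_mul, ← Real.exp_neg,
    ← Real.exp_add, Real.exp_le_exp, Real.log_exp]
  have hlog : 0 < Real.log 2 := Real.log_pos one_lt_two
  have : Real.log 2 / T * t ≤ Real.log 2 * ((t / T : ℕ) + 1) := by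
    rw [div_mul_eq_mul_div, div_le_iff₀ hT']
    nlinarith
  linarith

variable [NormedSpace ℝ E]

def PosHomogeneous (f : E → E) : Prop :=
  ∀ c : ℝ, 0 < c → ∀ x, f (c • x) = c • f x

namespace PosHomogeneous

variable {f : E → E}

theorem map_zero (hf : PosHomogeneous f) : f 0 = 0 := by
  have h := hf 2 two_pos 0
  rw [smul_zero, two_smul] at h
  simpa using h

theorem iterate (hf : PosHomogeneous f) (t : ℕ) : PosHomogeneous f^[t] :=
  fun c hc => Function.Commute.iterate_left (hf c hc) t

theorem norm_map_eq (hf : PosHomogeneous f) (x : E) : ‖f x‖ = ‖x‖ * ‖f (‖x‖⁻¹ • x)‖ := by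
  rcases eq_or_ne x 0 with rfl | hx
  · simp [hf.map_zero]
  · have hpos : 0 < ‖x‖ := norm_pos_iff.2 hx
    conv_lhs => rw [← smul_inv_smul₀ hpos.ne' x, hf _ hpos]
    rw [norm_smul, norm_norm]

theorem exists_norm_map_le [ProperSpace E] (hf : PosHomogeneous f) (hc : Continuous f) :
    ∃ L : ℝ, 1 ≤ L ∧ ∀ x, ‖f x‖ ≤ L * ‖x‖ := by
  obtain ⟨B, hB⟩ := (isCompact_closedBall (0 : E) 1).exists_bound_of_continuousOn hc.continuousOn
  refine ⟨max B 1, le_max_right _ _, fun x => ?_⟩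
  have hu : ‖x‖⁻¹ • x ∈ Metric.closedBall (0 : E) 1 := by
    rw [mem_closedBall_zero_iff, norm_smul, norm_inv, norm_norm]
    exact inv_mul_le_one_of_le₀ le_rfl (norm_nonneg x)
  rw [hf.norm_map_eq, mul_comm]
  exact mul_le_mul_of_nonneg_right ((hB _ hu).trans (le_max_left _ _)) (norm_nonneg x)

theorem exists_forall_exists_halving [ProperSpace E] (hf : PosHomogeneous f) (hc : Continuous f)
    (hatt : ∀ x, Tendsto (fun t => f^[t] x) atTop (𝓝 0)) :
    ∃ T : ℕ, 0 < T ∧ ∀ x, ∃ s ∈ Icc 1 T, ‖f^[s] x‖ ≤ ‖x‖ / 2 := by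
  have hcover : Metric.sphere (0 : E) 1 ⊆ ⋃ s : ℕ, {y | ‖f^[s] y‖ < 1 / 2} := fun y _ =>
    Set.mem_iUnion.2 (((hatt y).eventually (Metric.ball_mem_nhds 0 one_half_pos)).exists.imp
      fun _ hs => mem_ball_zero_iff.1 hs)
  obtain ⟨S, hS⟩ := (isCompact_sphere (0 : E) 1).elim_finite_subcover _
    (fun s => isOpen_lt (hc.iterate s).norm continuous_const) hcover
  refine ⟨S.sup id + 1, Nat.succ_pos _, fun x => ?_⟩
  rcases eq_or_ne x 0 with rfl | hx
  · exact ⟨1, by simp, by simp [hf.map_zero]⟩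
  have hu : ‖x‖⁻¹ • x ∈ Metric.sphere (0 : E) 1 := by
    rw [mem_sphere_zero_iff_norm]
    exact norm_smul_inv_norm hx
  obtain ⟨s, hsS, hs⟩ := Set.mem_iUnion₂.1 (hS hu)
  have hs0 : s ≠ 0 := by
    rintro rfl
    have h : ‖‖x‖⁻¹ • x‖ < 1 / 2 := hs
    rw [mem_sphere_zero_iff_norm.1 hu] at h
    norm_num at h
  have hsT : s ≤ S.sup id + 1 := (le_sup (f := id) hsS).trans (Nat.le_succ _)
  refine ⟨s, mem_Icc.2 ⟨Nat.one_le_iff_ne_zero.2 hs0, hsT⟩, ?_⟩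
  rw [(hf.iterate s).norm_map_eq, div_eq_mul_one_div]
  exact mul_le_mul_of_nonneg_left hs.le (norm_nonneg x)

theorem exists_norm_iterate_le_exp_of_tendsto [ProperSpace E] (hf : PosHomogeneous f)
    (hc : Continuous f) (hatt : ∀ x, Tendsto (fun t => f^[t] x) atTop (𝓝 0)) :
    ∃ c1 c2 : ℝ, 1 ≤ c1 ∧ 0 < c2 ∧ ∀ x, ∀ t : ℕ, ‖f^[t] x‖ ≤ c1 * Real.exp (-c2 * t) * ‖x‖ := by
  obtain ⟨L, hL1, hL⟩ := hf.exists_norm_map_le hc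
  obtain ⟨T, hT, hhalf⟩ := hf.exists_forall_exists_halving hc hatt
  have hLT : 1 ≤ L ^ T := one_le_pow₀ hL1
  refine ⟨2 * L ^ T, Real.log 2 / T, by linarith, by positivity, fun x t => ?_⟩
  calc ‖f^[t] x‖ ≤ L ^ T * 2⁻¹ ^ (t / T) * ‖x‖ :=
        norm_iterate_le_of_forall_exists_halving hL1 hL hhalf t x
    _ ≤ L ^ T * (2 * Real.exp (-(Real.log 2 / T) * t)) * ‖x‖ := by
        gcongr
        exact inv_two_pow_div_le_two_mul_exp hT t
    _ = 2 * L ^ T * Real.exp (-(Real.log 2 / T) * t) * ‖x‖ := by ring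

end PosHomogeneous

end Iteration

theorem exists_forall_add_eq_of_finite_jumps {α : Type*} {σ : ℕ → α}
    (h : {t : ℕ | 1 ≤ t ∧ σ t ≠ σ (t - 1)}.Finite) : ∃ T, ∀ t, σ (T + t) = σ T := by
  obtain ⟨T, hT⟩ := h.bddAbove
  refine ⟨T, fun t => ?_⟩
  induction t with
  | zero => rfl
  | succ t ih =>
    by_contra hne
    have hjump : T + (t + 1) ∈ {t : ℕ | 1 ≤ t ∧ σ t ≠ σ (t - 1)} :=
      ⟨by omega, fun h => hne (h.trans ih)⟩
    have := hT hjump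
    omega

section ConewiseLinear

variable {n m : ℕ} {C : Fin m → Set (EuclideanSpace ℝ (Fin n))} {A : Fin m → Matrix (Fin n) (Fin n) ℝ}
  {φ : ℕ → EuclideanSpace ℝ (Fin n) → EuclideanSpace ℝ (Fin n)}

theorem cls_one_apply (hφ0 : ∀ x, φ 0 x = x)
    (hφstep : ∀ t x i, φ t x ∈ C i → φ (t + 1) x = (A i).mulVec (φ t x))
    {i : Fin m} {y : EuclideanSpace ℝ (Fin n)} (hy : y ∈ C i) :
    φ 1 y = WithLp.toLp 2 ((A i).mulVec y) := by
  have h := hφstep 0 y i (by rwa [hφ0])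
  rw [hφ0] at h
  rw [← h, WithLp.toLp_ofLp]

theorem cls_succ_apply (hcover : (⋃ i, C i) = Set.univ) (hφ0 : ∀ x, φ 0 x = x)
    (hφstep : ∀ t x i, φ t x ∈ C i → φ (t + 1) x = (A i).mulVec (φ t x)) (t : ℕ) (x) :
    φ (t + 1) x = φ 1 (φ t x) := by
  obtain ⟨i, hi⟩ := Set.iUnion_eq_univ_iff.1 hcover (φ t x)
  rw [cls_one_apply hφ0 hφstep hi, ← hφstep t x i hi]

theorem cls_eq_iterate (hcover : (⋃ i, C i) = Set.univ) (hφ0 : ∀ x, φ 0 x = x)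
    (hφstep : ∀ t x i, φ t x ∈ C i → φ (t + 1) x = (A i).mulVec (φ t x)) (t : ℕ) :
    φ t = (φ 1)^[t] := by
  induction t with
  | zero => exact funext hφ0
  | succ t ih =>
    funext x
    rw [cls_succ_apply hcover hφ0 hφstep, ih, Function.iterate_succ_apply']

theorem cls_continuous_one (hclosed : ∀ i, IsClosed (C i)) (hcover : (⋃ i, C i) = Set.univ)
    (hφ0 : ∀ x, φ 0 x = x)
    (hφstep : ∀ t x i, φ t x ∈ C i → φ (t + 1) x = (A i).mulVec (φ t x)) :
    Continuous (φ 1) :=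
  (locallyFinite_of_finite C).continuous hcover hclosed fun i =>
    (Matrix.toEuclideanCLM (𝕜 := ℝ) (A i)).continuous.continuousOn.congr fun _ hy =>
      cls_one_apply hφ0 hφstep hy

theorem cls_posHomogeneous_one (hcone : ∀ i, ∀ y ∈ C i, ∀ c : ℝ, 0 < c → c • y ∈ C i)
    (hcover : (⋃ i, C i) = Set.univ) (hφ0 : ∀ x, φ 0 x = x)
    (hφstep : ∀ t x i, φ t x ∈ C i → φ (t + 1) x = (A i).mulVec (φ t x)) :
    PosHomogeneous (φ 1) := by
  intro c hc y
  obtain ⟨i, hi⟩ := Set.iUnion_eq_univ_iff.1 hcover y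
  rw [cls_one_apply hφ0 hφstep (hcone i y hi c hc), cls_one_apply hφ0 hφstep hi, WithLp.ofLp_smul,
    Matrix.mulVec_smul, WithLp.toLp_smul]

theorem cls_mulVec_pow_eq (hφstep : ∀ t x i, φ t x ∈ C i → φ (t + 1) x = (A i).mulVec (φ t x))
    {T : ℕ} {i : Fin m} {x : EuclideanSpace ℝ (Fin n)} (hmem : ∀ t, φ (T + t) x ∈ C i) (t : ℕ) :
    WithLp.toLp 2 ((A i ^ t).mulVec (φ T x)) = φ (T + t) x := by
  induction t with
  | zero => simp
  | succ t ih =>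
    rw [pow_succ', ← Matrix.mulVec_mulVec, ← WithLp.ofLp_toLp 2 ((A i ^ t).mulVec _), ih,
      ← add_assoc, ← hφstep _ x i (hmem t), WithLp.toLp_ofLp]

theorem cls_tendsto_zero (hcover : (⋃ i, C i) = Set.univ) (hφ0 : ∀ x, φ 0 x = x)
    (hφstep : ∀ t x i, φ t x ∈ C i → φ (t + 1) x = (A i).mulVec (φ t x)) {c1 c2 : ℝ} (hc1 : 0 ≤ c1)
    (hc2 : 0 < c2) (hF : ∀ x ∈ {x | ∃ i, ∀ t : ℕ, WithLp.toLp 2 ((A i ^ t).mulVec x) ∈ C i},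
      ∀ t : ℕ, ‖φ t (WithLp.toLp 2 x)‖ ≤ c1 * Real.exp (-c2 * t) * ‖x‖)
    {x : EuclideanSpace ℝ (Fin n)} {σ : ℕ → Fin m} (hσ : ∀ t, φ t x ∈ C (σ t))
    (hjumps : {t : ℕ | 1 ≤ t ∧ σ t ≠ σ (t - 1)}.Finite) :
    Tendsto (fun t => φ t x) atTop (𝓝 0) := by
  obtain ⟨T, hT⟩ := exists_forall_add_eq_of_finite_jumps hjumps
  have hmem : ∀ t, φ (T + t) x ∈ C (σ T) := fun t => hT t ▸ hσ (T + t)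
  have hF_mem :
      WithLp.ofLp (φ T x) ∈ {x | ∃ i, ∀ t : ℕ, WithLp.toLp 2 ((A i ^ t).mulVec x) ∈ C i} :=
    ⟨σ T, fun t => (cls_mulVec_pow_eq hφstep hmem t).symm ▸ hmem t⟩
  have hdecay : ∀ t : ℕ, ‖φ (t + T) x‖ ≤ c1 * Real.exp (-c2 * t) * ‖φ T x‖ := fun t => by
    rw [cls_eq_iterate hcover hφ0 hφstep, Function.iterate_add_apply,
      ← cls_eq_iterate hcover hφ0 hφstep, ← cls_eq_iterate hcover hφ0 hφstep]
    calc ‖φ t (φ T x)‖ ≤ c1 * Real.exp (-c2 * t) * ‖WithLp.ofLp (φ T x)‖ := by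
          simpa using hF _ hF_mem t
      _ ≤ c1 * Real.exp (-c2 * t) * ‖φ T x‖ := by
          gcongr
          simpa using (PiLp.lipschitzWith_ofLp 2 _).norm_le_mul (by simp) (φ T x)
  rw [← tendsto_add_atTop_iff_nat T]
  refine squeeze_zero_norm hdecay ?_
  have hexp : Tendsto (fun t : ℕ => Real.exp (-c2 * t)) atTop (𝓝 0) :=
    Real.tendsto_exp_atBot.comp
      (tendsto_natCast_atTop_atTop.const_mul_atTop_of_neg (neg_neg_of_pos hc2))
  simpa using (hexp.const_mul c1).mul_const ‖φ T x‖

end ConewiseLinear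

theorem exists_exp_bound_toLp {n : ℕ}
    {φ : ℕ → EuclideanSpace ℝ (Fin n) → EuclideanSpace ℝ (Fin n)} {c1 c2 : ℝ} (hc1 : 1 ≤ c1)
    (h : ∀ x, ∀ t : ℕ, ‖φ t x‖ ≤ c1 * Real.exp (-c2 * t) * ‖x‖) :
    ∃ c1' : ℝ, 1 ≤ c1' ∧
      ∀ x : Fin n → ℝ, ∀ t : ℕ, ‖φ t (WithLp.toLp 2 x)‖ ≤ c1' * Real.exp (-c2 * t) * ‖x‖ := by
  obtain ⟨K, hK⟩ : ∃ K : NNReal, ∀ x : Fin n → ℝ, ‖WithLp.toLp 2 x‖ ≤ K * ‖x‖ :=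
    ⟨_, (PiLp.lipschitzWith_toLp 2 _).norm_le_mul (by simp)⟩
  refine ⟨c1 * (1 + K), by nlinarith [K.coe_nonneg], fun x t => ?_⟩
  calc ‖φ t (WithLp.toLp 2 x)‖ ≤ c1 * Real.exp (-c2 * t) * ‖WithLp.toLp 2 x‖ := h _ t
    _ ≤ c1 * Real.exp (-c2 * t) * ((1 + K) * ‖x‖) := by
        gcongr
        exact (hK x).trans (by nlinarith [norm_nonneg x])
    _ = c1 * (1 + K) * Real.exp (-c2 * t) * ‖x‖ := by ring

theorem cls_ges_iff_ges_on_F_general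
    (n m : ℕ)
    (C : Fin m → Set (EuclideanSpace ℝ (Fin n)))
    (hCclosed : ∀ i, IsClosed (C i))
    (hCcone : ∀ i, ∀ x ∈ C i, ∀ y ∈ C i, ∀ a b : ℝ, 0 ≤ a → 0 ≤ b → a • x + b • y ∈ C i)
    (hCcover : (⋃ i, C i) = Set.univ)
    (A : Fin m → Matrix (Fin n) (Fin n) ℝ)
    -- φ is the (unique) solution map of the CLS
    (φ : ℕ → EuclideanSpace ℝ (Fin n) → EuclideanSpace ℝ (Fin n))
    (hφ0 : ∀ x, φ 0 x = x)
    (hφstep : ∀ t x i, φ t x ∈ C i → φ (t + 1) x = (A i).mulVec (φ t x))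
    -- every solution exhibits a finite number of switches: ς(x) < ∞
    (hfin : ∀ x, ∃ σ : ℕ → Fin m, (∀ t, φ t x ∈ C (σ t)) ∧
      {t : ℕ | 1 ≤ t ∧ σ t ≠ σ (t - 1)}.Finite) :
    (∃ c1 c2 : ℝ, 1 ≤ c1 ∧ 0 < c2 ∧
        ∀ x, ∀ t : ℕ, ‖φ t x‖ ≤ c1 * Real.exp (-c2 * t) * ‖x‖) ↔
      (∃ c1 c2 : ℝ, 1 ≤ c1 ∧ 0 < c2 ∧
        ∀ x ∈ {x | ∃ i, ∀ t : ℕ, WithLp.toLp 2 ((A i ^ t).mulVec x) ∈ C i},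
          ∀ t : ℕ, ‖φ t (WithLp.toLp 2 x)‖ ≤ c1 * Real.exp (-c2 * t) * ‖x‖) := by
  constructor
  · rintro ⟨c1, c2, hc1, hc2, h⟩
    obtain ⟨c1', hc1', h'⟩ := exists_exp_bound_toLp hc1 h
    exact ⟨c1', c2, hc1', hc2, fun x _ t => h' x t⟩
  · rintro ⟨c1, c2, hc1, hc2, hF⟩
    have hcone : ∀ i, ∀ y ∈ C i, ∀ c : ℝ, 0 < c → c • y ∈ C i := fun i y hy c hc => by
      simpa using hCcone i y hy y hy c 0 hc.le le_rfl
    have hiter := cls_eq_iterate hCcover hφ0 hφstep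
    have hatt : ∀ x, Tendsto (fun t => (φ 1)^[t] x) atTop (𝓝 0) := fun x => by
      obtain ⟨σ, hσ, hjumps⟩ := hfin x
      exact (cls_tendsto_zero hCcover hφ0 hφstep (by linarith) hc2 hF hσ hjumps).congr
        fun t => by rw [hiter t]
    obtain ⟨c1', c2', hc1', hc2', hbound⟩ :=
      (cls_posHomogeneous_one hcone hCcover hφ0 hφstep).exists_norm_iterate_le_exp_of_tendsto
        (cls_continuous_one hCclosed hCcover hφ0 hφstep) hatt
    exact ⟨c1', c2', hc1', hc2', fun x t => hiter t ▸ hbound x t⟩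

/-- For a discrete-time conewise linear system satisfying the continuity
assumption, if every solution exhibits a finite number of switches (i.e. for every
initial condition there is an admissible mode sequence with finitely many jumps), then
the origin is globally exponentially stable if and only if the origin is globally
exponentially stable for the restriction of the system to the forward invariant set
`F = {x : ∃ i, ∀ t, Aᵢᵗ x ∈ Cᵢ}`. -/
theorem cls_ges_iff_ges_on_F
    (n m : ℕ) (hm : 1 ≤ m)
    (C : Fin m → Set (EuclideanSpace ℝ (Fin n)))
    (hCne : ∀ i, (C i).Nonempty)
    (hCclosed : ∀ i, IsClosed (C i))
    (hCcone : ∀ i, ∀ x ∈ C i, ∀ y ∈ C i, ∀ a b : ℝ, 0 ≤ a → 0 ≤ b → a • x + b • y ∈ C i)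
    (hCcover : (⋃ i, C i) = Set.univ)
    (hCdisj : ∀ i j, i ≠ j → interior (C i) ∩ interior (C j) = ∅)
    (A : Fin m → Matrix (Fin n) (Fin n) ℝ)
    (hcont : ∀ i j, ∀ ξ ∈ C i ∩ C j, (A i).mulVec ξ = (A j).mulVec ξ)
    -- φ is the (unique) solution map of the CLS
    (φ : ℕ → EuclideanSpace ℝ (Fin n) → EuclideanSpace ℝ (Fin n))
    (hφ0 : ∀ x, φ 0 x = x)
    (hφstep : ∀ t x i, φ t x ∈ C i → φ (t + 1) x = (A i).mulVec (φ t x))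
    -- every solution exhibits a finite number of switches: ς(x) < ∞
    (hfin : ∀ x, ∃ σ : ℕ → Fin m, (∀ t, φ t x ∈ C (σ t)) ∧
      {t : ℕ | 1 ≤ t ∧ σ t ≠ σ (t - 1)}.Finite) :
    (∃ c1 c2 : ℝ, 1 ≤ c1 ∧ 0 < c2 ∧
        ∀ x, ∀ t : ℕ, ‖φ t x‖ ≤ c1 * Real.exp (-c2 * t) * ‖x‖) ↔
      (∃ c1 c2 : ℝ, 1 ≤ c1 ∧ 0 < c2 ∧
        ∀ x ∈ {x | ∃ i, ∀ t : ℕ, WithLp.toLp 2 ((A i ^ t).mulVec x) ∈ C i},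
          ∀ t : ℕ, ‖φ t (WithLp.toLp 2 x)‖ ≤ c1 * Real.exp (-c2 * t) * ‖x‖) :=
  cls_ges_iff_ges_on_F_general n m C hCclosed hCcone hCcover A φ hφ0 hφstep hfin
end

section
/- Let L ∈ ℝ^{n×n} have n distinct eigenvalues λ_1 > λ_2 > … > λ_n > 0, so L is diagonalizable; let v_1,…,v_n be corresponding eigenvectors (L v_i = λ_i v_i) and let β_0 ∈ ℝ^n with β_0 ≥ 0 componentwise, written β_0 = Σ_{i=1}^n γ_i v_i. Set ρ_i := γ_i v_i ∈ ℝ^n and μ_i := −ln(λ_i/λ_1) for i = 1,…,n (so 0 = μ_1 < μ_2 < … < μ_n), and assume ρ_1 ≥ 0 componentwise. If for every component index ℓ ∈ {1,…,n}, the scalars z_i := (ρ_i)_ℓ satisfy z_1 ≥ 0, z_1 + … + z_n ≥ 0, and one of the following: (i) z_2,…,z_n ≥ 0; or (ii) z_2,…,z_n ≤ 0; or (iii) there exists j ∈ {2,…,n} such that z_1 ≥ −Σ_{i=2, i≠j}^{n} (1 − μ_i/μ_j) z_i e^{−μ_i s} for all s ∈ ℝ_+; then the solution β_t := L^t β_0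 of β_{t+1} = L β_t is componentwise non-negative for every t ∈ ℕ. -/
open Matrix

/-!
Writing `ρᵢ = γᵢ vᵢ` and `λᵢ^t = λ₁^t e^{-μᵢ t}`, the `ℓ`-th component of `Lᵗ β₀` is `λ₁^t` times
the exponential sum `f(s) = ∑ᵢ zᵢ e^{-μᵢ s}`, `zᵢ = (ρᵢ)_ℓ`, at `s = t`, so it suffices that
`f ≥ 0` on `[0, ∞)`. Case (i) is termwise. In cases (ii) and (iii) the function `e^{c s} f(s)`,
with `c = 0`, resp. `c = μⱼ`, has derivative `e^{c s} ∑ᵢ (c - μᵢ) zᵢ e^{-μᵢ s} ≥ 0` on `[0, ∞)`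
(in case (iii) this is `μⱼ e^{μⱼ s} (z₁ + ∑_{i ≠ 1, j} (1 - μᵢ/μⱼ) zᵢ e^{-μᵢ s})`), so it is
nondecreasing there, starting from `f(0) = ∑ᵢ zᵢ ≥ 0`.
-/

open Finset Real

section ExpSum

variable {ι : Type*} (S : Finset ι) (z μ : ι → ℝ)

noncomputable def expSum (s : ℝ) : ℝ := ∑ i ∈ S, z i * exp (-μ i * s)

variable {S z μ}

lemma expSum_zero : expSum S z μ 0 = ∑ i ∈ S, z i := by
  simp [expSum]

lemma expSum_nonneg (hz : ∀ i ∈ S, 0 ≤ z i) (s : ℝ) : 0 ≤ expSum S z μ s :=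
  sum_nonneg fun i hi => mul_nonneg (hz i hi) (exp_pos _).le

lemma expSum_sub_const (c s : ℝ) :
    expSum S z (fun i => μ i - c) s = exp (c * s) * expSum S z μ s := by
  simp only [expSum, mul_sum]
  refine sum_congr rfl fun i _ => ?_
  rw [mul_left_comm, ← exp_add]
  ring_nf

variable (S z μ) in
lemma hasDerivAt_expSum (s : ℝ) :
    HasDerivAt (expSum S z μ) (expSum S (fun i => -(z i * μ i)) μ s) s := by
  unfold expSum
  exact HasDerivAt.fun_sum fun i _ =>
    (((hasDerivAt_id' s).const_mul (-μ i)).exp.const_mul (z i)).congr_deriv (by ring)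

lemma expSum_nonneg_of_shifted_deriv_nonneg (c : ℝ) (h0 : 0 ≤ ∑ i ∈ S, z i)
    (hderiv : ∀ u, 0 ≤ u → 0 ≤ expSum S (fun i => z i * (c - μ i)) μ u)
    {s : ℝ} (hs : 0 ≤ s) : 0 ≤ expSum S z μ s := by
  set g := expSum S z (fun i => μ i - c) with hg
  have hg' : ∀ u, HasDerivAt g (exp (c * u) * expSum S (fun i => z i * (c - μ i)) μ u) u := by
    intro u
    convert hasDerivAt_expSum S z (fun i => μ i - c) u using 1
    rw [← expSum_sub_const]
    congr 1
    funext i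
    ring
  have hmono : MonotoneOn g (Set.Ici 0) := by
    refine monotoneOn_of_hasDerivWithinAt_nonneg (convex_Ici 0)
      (fun u _ => (hg' u).continuousAt.continuousWithinAt)
      (fun u _ => (hg' u).hasDerivWithinAt) fun u hu => ?_
    rw [interior_Ici] at hu
    exact mul_nonneg (exp_pos _).le (hderiv u (le_of_lt hu))
  have hgs : 0 ≤ g s := by
    calc 0 ≤ ∑ i ∈ S, z i := h0
      _ = g 0 := expSum_zero.symm
      _ ≤ g s := hmono Set.self_mem_Ici hs hs
  rw [hg, expSum_sub_const] at hgs
  exact nonneg_of_mul_nonneg_right hgs (exp_pos _)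

variable [DecidableEq ι] {T : Finset ι} {i₀ : ι}

lemma expSum_insert_nonneg_of_nonpos (hμ₀ : μ i₀ = 0) (hμ : ∀ i ∈ T, 0 ≤ μ i)
    (hz : ∀ i ∈ T, z i ≤ 0) (h0 : 0 ≤ ∑ i ∈ insert i₀ T, z i) {s : ℝ} (hs : 0 ≤ s) :
    0 ≤ expSum (insert i₀ T) z μ s := by
  refine expSum_nonneg_of_shifted_deriv_nonneg 0 h0 (fun u _ => expSum_nonneg ?_ u) hs
  refine forall_mem_insert _ _ _ |>.2 ⟨by simp [hμ₀], fun i hi => ?_⟩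
  nlinarith [hz i hi, hμ i hi]

lemma expSum_insert_nonneg_of_dominant {j : ι} (hi₀ : i₀ ∉ T) (hj : j ∈ T)
    (hμ₀ : μ i₀ = 0) (hμj : 0 < μ j) (h0 : 0 ≤ ∑ i ∈ insert i₀ T, z i)
    (hdom : ∀ u, 0 ≤ u →
      -(∑ i ∈ T.erase j, (1 - μ i / μ j) * (z i * exp (-μ i * u))) ≤ z i₀)
    {s : ℝ} (hs : 0 ≤ s) : 0 ≤ expSum (insert i₀ T) z μ s := by
  refine expSum_nonneg_of_shifted_deriv_nonneg (μ j) h0 (fun u hu => ?_) hs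
  have hexpand : expSum (insert i₀ T) (fun i => z i * (μ j - μ i)) μ u =
      μ j * (z i₀ + ∑ i ∈ T.erase j, (1 - μ i / μ j) * (z i * exp (-μ i * u))) := by
    rw [expSum, sum_insert hi₀, ← add_sum_erase T _ hj, mul_add, mul_sum, hμ₀]
    simp only [sub_self, mul_zero, zero_mul, zero_add, neg_zero, exp_zero, mul_one, sub_zero]
    congr 1
    · ring
    · refine sum_congr rfl fun i _ => ?_
      field_simp
  rw [hexpand]
  exact mul_nonneg hμj.le (by linarith [hdom u hu])

end ExpSum

lemma Matrix.pow_mulVec_of_mulVec_eq_smul {m R : Type*} [Fintype m] [DecidableEq m]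
    [CommSemiring R] {L : Matrix m m R} {v : m → R} {a : R} (hv : L *ᵥ v = a • v) (t : ℕ) :
    (L ^ t) *ᵥ v = a ^ t • v := by
  induction t with
  | zero => simp
  | succ t ih => rw [pow_succ', ← mulVec_mulVec, ih, mulVec_smul, hv, smul_smul, ← pow_succ]

lemma Matrix.pow_mulVec_sum_smul {m ι R : Type*} [Fintype m] [DecidableEq m] [CommSemiring R]
    {L : Matrix m m R} {S : Finset ι} {v : ι → m → R} {a γ : ι → R}
    (hv : ∀ i ∈ S, L *ᵥ v i = a i • v i) (t : ℕ) :
    (L ^ t) *ᵥ ∑ i ∈ S, γ i • v i = ∑ i ∈ S, a i ^ t • γ i • v i := by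
  rw [mulVec_sum]
  refine sum_congr rfl fun i hi => ?_
  rw [mulVec_smul, pow_mulVec_of_mulVec_eq_smul (hv i hi), smul_comm]

lemma pow_eq_pow_mul_exp_log_div {a b : ℝ} (ha : 0 < a) (hb : 0 < b) (t : ℕ) :
    b ^ t = a ^ t * exp (log (b / a) * t) := by
  rw [mul_comm (log _), exp_nat_mul, exp_log (div_pos hb ha), ← mul_pow, mul_div_cancel₀ _ ha.ne']

theorem nonneg_solution_of_modal_conditions_general
    (n : ℕ) (hn : 1 ≤ n)
    (L : Matrix (Fin n) (Fin n) ℝ)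
    (lam : ℕ → ℝ) (v : ℕ → Fin n → ℝ) (γ : ℕ → ℝ)
    (hlampos : ∀ i, 1 ≤ i → i ≤ n → 0 < lam i)
    (hlammono : ∀ i j, 1 ≤ i → i < j → j ≤ n → lam j < lam i)
    (hev : ∀ i, 1 ≤ i → i ≤ n → L.mulVec (v i) = lam i • v i)
    (β0 : Fin n → ℝ)
    (hβ0 : β0 = ∑ i ∈ Finset.Icc 1 n, γ i • v i)
    (ρ : ℕ → Fin n → ℝ) (hρ : ∀ i, ρ i = γ i • v i)
    (μ : ℕ → ℝ) (hμ : ∀ i, μ i = -Real.log (lam i / lam 1))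
    (hcond : ∀ ℓ : Fin n,
      0 ≤ ρ 1 ℓ ∧
      0 ≤ ∑ i ∈ Finset.Icc 1 n, ρ i ℓ ∧
      ((∀ i, 2 ≤ i → i ≤ n → 0 ≤ ρ i ℓ) ∨
       (∀ i, 2 ≤ i → i ≤ n → ρ i ℓ ≤ 0) ∨
       (∃ j, 2 ≤ j ∧ j ≤ n ∧ ∀ s : ℝ, 0 ≤ s →
         -(∑ i ∈ (Finset.Icc 2 n).erase j,
             (1 - μ i / μ j) * (ρ i ℓ * Real.exp (-μ i * s))) ≤ ρ 1 ℓ))) :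
    ∀ t : ℕ, ∀ ℓ : Fin n, 0 ≤ (L ^ t).mulVec β0 ℓ := by
  intro t ℓ
  have hlam1 : 0 < lam 1 := hlampos 1 le_rfl hn
  have hμ1 : μ 1 = 0 := by rw [hμ, div_self hlam1.ne', log_one, neg_zero]
  have hμ_pos : ∀ i ∈ Icc 2 n, 0 < μ i := fun i hi => by
    obtain ⟨hi2, hin⟩ := mem_Icc.1 hi
    rw [hμ, neg_pos]
    exact log_neg (div_pos (hlampos i (by omega) hin) hlam1)
      ((div_lt_one hlam1).2 (hlammono 1 i le_rfl (by omega) hin))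
  have hsol : (L ^ t *ᵥ β0) ℓ = lam 1 ^ t * expSum (Icc 1 n) (ρ · ℓ) μ t := by
    rw [hβ0, pow_mulVec_sum_smul fun i hi => hev i (mem_Icc.1 hi).1 (mem_Icc.1 hi).2,
      Finset.sum_apply, expSum, mul_sum]
    refine sum_congr rfl fun i hi => ?_
    rw [pow_eq_pow_mul_exp_log_div hlam1 (hlampos i (mem_Icc.1 hi).1 (mem_Icc.1 hi).2), hρ, hμ,
      neg_neg]
    simp only [Pi.smul_apply, smul_eq_mul]
    ring
  have hIcc : Icc 1 n = insert 1 (Icc 2 n) := by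
    ext i
    simp only [mem_Icc, mem_insert]
    omega
  obtain ⟨hz1, hsum, hcase⟩ := hcond ℓ
  rw [hIcc] at hsum
  rw [hsol, hIcc]
  refine mul_nonneg (pow_nonneg hlam1.le t) ?_
  rcases hcase with hpos | hneg | ⟨j, hj2, hjn, hdom⟩
  · refine expSum_nonneg (fun i hi => ?_) _
    rcases mem_insert.1 hi with rfl | hi
    exacts [hz1, hpos i (mem_Icc.1 hi).1 (mem_Icc.1 hi).2]
  · exact expSum_insert_nonneg_of_nonpos hμ1 (fun i hi => (hμ_pos i hi).le)
      (fun i hi => hneg i (mem_Icc.1 hi).1 (mem_Icc.1 hi).2) hsum t.cast_nonneg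
  · exact expSum_insert_nonneg_of_dominant (by simp) (mem_Icc.2 ⟨hj2, hjn⟩) hμ1
      (hμ_pos j (mem_Icc.2 ⟨hj2, hjn⟩)) hsum hdom t.cast_nonneg

/-- Non-negativity of the solution `β_t = Lᵗ β₀` of `β_{t+1} = L β_t` when
`L` has `n` distinct positive eigenvalues `λ₁ > ⋯ > λₙ > 0` with eigenvectors
`v₁, …, vₙ`, `β₀ = ∑ γᵢ vᵢ ≥ 0`, `ρᵢ := γᵢ vᵢ`, `μᵢ := -ln(λᵢ/λ₁)`, `ρ₁ ≥ 0`, and for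
every component `ℓ` the scalars `zᵢ := (ρᵢ)_ℓ` satisfy one of the sufficient conditions
for non-negativity of the exponential sum `z₁ + ∑_{i≥2} zᵢ e^{-μᵢ s}`. -/
theorem nonneg_solution_of_modal_conditions
    (n : ℕ) (hn : 1 ≤ n)
    (L : Matrix (Fin n) (Fin n) ℝ)
    (lam : ℕ → ℝ) (v : ℕ → Fin n → ℝ) (γ : ℕ → ℝ)
    (hlampos : ∀ i, 1 ≤ i → i ≤ n → 0 < lam i)
    (hlammono : ∀ i j, 1 ≤ i → i < j → j ≤ n → lam j < lam i)
    (hv0 : ∀ i, 1 ≤ i → i ≤ n → v i ≠ 0)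
    (hev : ∀ i, 1 ≤ i → i ≤ n → L.mulVec (v i) = lam i • v i)
    (β0 : Fin n → ℝ)
    (hβ0 : β0 = ∑ i ∈ Finset.Icc 1 n, γ i • v i)
    (hβ0nn : ∀ ℓ, 0 ≤ β0 ℓ)
    (ρ : ℕ → Fin n → ℝ) (hρ : ∀ i, ρ i = γ i • v i)
    (μ : ℕ → ℝ) (hμ : ∀ i, μ i = -Real.log (lam i / lam 1))
    (hρ1 : ∀ ℓ, 0 ≤ ρ 1 ℓ)
    (hcond : ∀ ℓ : Fin n,
      0 ≤ ρ 1 ℓ ∧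
      0 ≤ ∑ i ∈ Finset.Icc 1 n, ρ i ℓ ∧
      ((∀ i, 2 ≤ i → i ≤ n → 0 ≤ ρ i ℓ) ∨
       (∀ i, 2 ≤ i → i ≤ n → ρ i ℓ ≤ 0) ∨
       (∃ j, 2 ≤ j ∧ j ≤ n ∧ ∀ s : ℝ, 0 ≤ s →
         -(∑ i ∈ (Finset.Icc 2 n).erase j,
             (1 - μ i / μ j) * (ρ i ℓ * Real.exp (-μ i * s))) ≤ ρ 1 ℓ))) :
    ∀ t : ℕ, ∀ ℓ : Fin n, 0 ≤ (L ^ t).mulVec β0 ℓ :=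
  nonneg_solution_of_modal_conditions_general n hn L lam v γ hlampos hlammono hev β0 hβ0 ρ hρ μ hμ
    hcond
end

section
/- Let 0 < μ_2 < μ_3 and z_1, z_2, z_3 ∈ ℝ, and define φ(s) = z_1 + z_2 e^{−μ_2 s} + z_3 e^{−μ_3 s} for s ∈ ℝ_+. Then φ(s) ≥ 0 for all s ∈ ℝ_+ if and only if z_1 ≥ 0, z_1 + z_2 + z_3 ≥ 0, and one of the following conditions is satisfied: (i) z_2 ≥ 0; (ii) z_2 < 0 and z_3 ≤ 0; (iii) z_2 < 0, z_3 > 0 and μ_2 z_2 + μ_3 z_3 ≤ 0; (iv) z_2 < 0, z_3 > 0, μ_2 z_2 + μ_3 z_3 > 0 and z_1 + z_2 ((−μ_2 z_2)/(μ_3 z_3))^{μ_2/(μ_3−μ_2)} + z_3 ((−μ_2 z_2)/(μ_3 z_3))^{μ_3/(μ_3−μ_2)} ≥ 0. -/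
/-!
For `z₃ ≥ 0`, `φ` is convex as a function of `u = e^{-μ₂ s}`, since `e^{-μ₃ s} = u^{μ₃/μ₂}` with
`μ₃/μ₂ > 1`; Bernoulli's inequality is the corresponding tangent-line bound. Hence when `z₂ < 0 < z₃`
the minimum of `φ` over `ℝ` is attained at the zero `s*` of `φ'`, and on `ℝ₊` `φ` is minimal either at
`s = 0` (when `s* ≤ 0`, i.e. `μ₂ z₂ + μ₃ z₃ ≤ 0`) or at `s*`, where `e^{-μ₂ s*}` and `e^{-μ₃ s*}` are the
two powers of `-μ₂ z₂ / (μ₃ z₃)` in condition (iv). In the remaining cases `φ` is linear in the pair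
`(e^{-μ₂ s}, e^{-μ₃ s})`, which ranges over the triangle with vertices `(0,0)`, `(1,0)`, `(1,1)`, and the
condition is nonnegativity at those vertices. Conversely `φ(0) = z₁ + z₂ + z₃` and `φ → z₁` at infinity.
-/

open Real Filter Topology

lemma tendsto_three_exp_atTop {μ2 μ3 : ℝ} (hμ2 : 0 < μ2) (hμ3 : 0 < μ3) (z1 z2 z3 : ℝ) :
    Tendsto (fun s => z1 + z2 * exp (-μ2 * s) + z3 * exp (-μ3 * s)) atTop (𝓝 z1) := by
  have hexp : ∀ {c : ℝ}, 0 < c → Tendsto (fun s => exp (-c * s)) atTop (𝓝 0) := fun hc =>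
    tendsto_exp_atBot.comp (tendsto_id.const_mul_atTop_of_neg (neg_lt_zero.2 hc))
  simpa using ((hexp hμ2).const_mul z2 |>.const_add z1).add ((hexp hμ3).const_mul z3)

lemma three_exp_nonneg_of_vertices {μ2 μ3 z1 z2 z3 s : ℝ} (hμ2 : 0 ≤ μ2) (hμ23 : μ2 ≤ μ3)
    (hs : 0 ≤ s) (h1 : 0 ≤ z1) (h12 : 0 ≤ z1 + z2) (h123 : 0 ≤ z1 + z2 + z3) :
    0 ≤ z1 + z2 * exp (-μ2 * s) + z3 * exp (-μ3 * s) := by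
  have ha : exp (-μ2 * s) ≤ 1 := exp_le_one_iff.2 (by nlinarith)
  have hba : exp (-μ3 * s) ≤ exp (-μ2 * s) := exp_le_exp.2 (by nlinarith)
  have hb : 0 ≤ exp (-μ3 * s) := (exp_pos _).le
  have hbary : z1 + z2 * exp (-μ2 * s) + z3 * exp (-μ3 * s) = z1 * (1 - exp (-μ2 * s))
      + (z1 + z2) * (exp (-μ2 * s) - exp (-μ3 * s)) + (z1 + z2 + z3) * exp (-μ3 * s) := by ring
  rw [hbary]
  have := mul_nonneg h1 (sub_nonneg.2 ha)
  have := mul_nonneg h12 (sub_nonneg.2 hba)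
  have := mul_nonneg h123 hb
  linarith

lemma mul_exp_neg_mul_sub_one_le {μ2 μ3 : ℝ} (hμ2 : 0 < μ2) (hμ23 : μ2 ≤ μ3) (x : ℝ) :
    μ3 * (exp (-μ2 * x) - 1) ≤ μ2 * (exp (-μ3 * x) - 1) := by
  have hbern := one_add_mul_self_le_rpow_one_add (s := exp (-μ2 * x) - 1)
    (by linarith [exp_pos (-μ2 * x)]) ((one_le_div hμ2).2 hμ23)
  rw [add_sub_cancel, ← exp_mul, show -μ2 * x * (μ3 / μ2) = -μ3 * x by field_simp] at hbern
  have := mul_le_mul_of_nonneg_left hbern hμ2.le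
  rw [mul_add, ← mul_assoc, mul_div_cancel₀ _ hμ2.ne'] at this
  linarith

/-- Tangent-line bound at `t`: the second factor on the left is `-φ'(t)`. -/
lemma three_exp_tangent {μ2 μ3 z3 : ℝ} (hμ2 : 0 < μ2) (hμ23 : μ2 ≤ μ3) (hz3 : 0 ≤ z3)
    (z2 t s : ℝ) :
    (exp (-μ2 * (s - t)) - 1) * (μ2 * z2 * exp (-μ2 * t) + μ3 * z3 * exp (-μ3 * t)) ≤
      μ2 * ((z2 * exp (-μ2 * s) + z3 * exp (-μ3 * s)) -
        (z2 * exp (-μ2 * t) + z3 * exp (-μ3 * t))) := by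
  have hshift : ∀ c, exp (-c * s) = exp (-c * t) * exp (-c * (s - t)) := fun c => by
    rw [← exp_add]; ring_nf
  rw [hshift μ2, hshift μ3]
  have := mul_le_mul_of_nonneg_left (mul_exp_neg_mul_sub_one_le hμ2 hμ23 (s - t))
    (mul_nonneg hz3 (exp_pos (-μ3 * t)).le)
  linarith

lemma three_exp_ge_at_zero {μ2 μ3 z2 z3 s : ℝ} (hμ2 : 0 < μ2) (hμ23 : μ2 ≤ μ3) (hz3 : 0 ≤ z3)
    (h : μ2 * z2 + μ3 * z3 ≤ 0) (hs : 0 ≤ s) :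
    z2 + z3 ≤ z2 * exp (-μ2 * s) + z3 * exp (-μ3 * s) := by
  have htan := three_exp_tangent hμ2 hμ23 hz3 z2 0 s
  simp only [sub_zero, mul_zero, exp_zero, mul_one] at htan
  have hdecay : exp (-μ2 * s) ≤ 1 := exp_le_one_iff.2 (by nlinarith)
  have := mul_nonneg_of_nonpos_of_nonpos (sub_nonpos.2 hdecay) h
  linarith [(mul_nonneg_iff_of_pos_left hμ2).1 (this.trans htan)]

/-- The zero of `φ'`. -/
noncomputable def critPoint (μ2 μ3 z2 z3 : ℝ) : ℝ :=
  -log (-μ2 * z2 / (μ3 * z3)) / (μ3 - μ2)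

lemma exp_neg_mul_critPoint {μ2 μ3 z2 z3 : ℝ} (hr : 0 < -μ2 * z2 / (μ3 * z3)) (c : ℝ) :
    exp (-c * critPoint μ2 μ3 z2 z3) = (-μ2 * z2 / (μ3 * z3)) ^ (c / (μ3 - μ2)) := by
  rw [rpow_def_of_pos hr, critPoint]
  ring_nf

lemma critPoint_nonneg {μ2 μ3 z2 z3 : ℝ} (hμ2 : 0 ≤ μ2) (hμ23 : μ2 ≤ μ3) (hz2 : z2 ≤ 0)
    (hz3 : 0 ≤ z3) (h : 0 ≤ μ2 * z2 + μ3 * z3) : 0 ≤ critPoint μ2 μ3 z2 z3 := by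
  have hden : 0 ≤ μ3 * z3 := mul_nonneg (hμ2.trans hμ23) hz3
  refine div_nonneg (neg_nonneg.2 (log_nonpos ?_ ?_)) (sub_nonneg.2 hμ23)
  · exact div_nonneg (by nlinarith) hden
  · exact div_le_one_of_le₀ (by linarith) hden

lemma mul_exp_add_mul_exp_critPoint_eq_zero {μ2 μ3 z2 z3 : ℝ} (hμ23 : μ2 ≠ μ3)
    (hr : 0 < -μ2 * z2 / (μ3 * z3)) :
    μ2 * z2 * exp (-μ2 * critPoint μ2 μ3 z2 z3) + μ3 * z3 * exp (-μ3 * critPoint μ2 μ3 z2 z3)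
      = 0 := by
  have hden : μ3 * z3 ≠ 0 := by rintro h; simp [h] at hr
  have hexp : exp (-μ3 * critPoint μ2 μ3 z2 z3)
      = exp (-μ2 * critPoint μ2 μ3 z2 z3) * (-μ2 * z2 / (μ3 * z3)) := by
    rw [← exp_log hr, ← exp_add, critPoint]
    congr 1
    field_simp [sub_ne_zero.2 hμ23.symm]
    ring
  rw [hexp, mul_left_comm (μ3 * z3), mul_div_cancel₀ _ hden]
  ring

lemma three_exp_critPoint_le {μ2 μ3 z2 z3 : ℝ} (hμ2 : 0 < μ2) (hμ23 : μ2 < μ3) (hz3 : 0 ≤ z3)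
    (hr : 0 < -μ2 * z2 / (μ3 * z3)) (s : ℝ) :
    z2 * exp (-μ2 * critPoint μ2 μ3 z2 z3) + z3 * exp (-μ3 * critPoint μ2 μ3 z2 z3) ≤
      z2 * exp (-μ2 * s) + z3 * exp (-μ3 * s) := by
  have htan := three_exp_tangent hμ2 hμ23.le hz3 z2 (critPoint μ2 μ3 z2 z3) s
  rw [mul_exp_add_mul_exp_critPoint_eq_zero hμ23.ne hr, mul_zero] at htan
  linarith [(mul_nonneg_iff_of_pos_left hμ2).1 htan]

/-- Necessary and sufficient conditions for non-negativity on `ℝ₊` of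
`φ(s) = z₁ + z₂ e^{-μ₂ s} + z₃ e^{-μ₃ s}` with `0 < μ₂ < μ₃` (case n = 3). -/
theorem nonneg_three_term_exp_iff
    (μ2 μ3 z1 z2 z3 : ℝ) (hμ2 : 0 < μ2) (hμ23 : μ2 < μ3) :
    (∀ s : ℝ, 0 ≤ s → 0 ≤ z1 + z2 * Real.exp (-μ2 * s) + z3 * Real.exp (-μ3 * s)) ↔
      (0 ≤ z1 ∧ 0 ≤ z1 + z2 + z3 ∧
        (0 ≤ z2 ∨
          (z2 < 0 ∧ z3 ≤ 0) ∨
          (z2 < 0 ∧ 0 < z3 ∧ μ2 * z2 + μ3 * z3 ≤ 0) ∨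
          (z2 < 0 ∧ 0 < z3 ∧ 0 < μ2 * z2 + μ3 * z3 ∧
            0 ≤ z1 + z2 * ((-μ2 * z2) / (μ3 * z3)) ^ (μ2 / (μ3 - μ2))
                + z3 * ((-μ2 * z2) / (μ3 * z3)) ^ (μ3 / (μ3 - μ2))))) := by
  have hμ3 : 0 < μ3 := hμ2.trans hμ23
  have hr : z2 < 0 → 0 < z3 → 0 < -μ2 * z2 / (μ3 * z3) := fun hz2 hz3 =>
    div_pos (by nlinarith) (mul_pos hμ3 hz3)
  constructor
  · intro h
    refine ⟨ge_of_tendsto (tendsto_three_exp_atTop hμ2 hμ3 z1 z2 z3) (eventually_atTop.2 ⟨0, h⟩),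
      by simpa using h 0 le_rfl, ?_⟩
    rcases le_or_gt 0 z2 with hz2 | hz2
    · exact Or.inl hz2
    rcases le_or_gt z3 0 with hz3 | hz3
    · exact Or.inr (Or.inl ⟨hz2, hz3⟩)
    rcases le_or_gt (μ2 * z2 + μ3 * z3) 0 with hAB | hAB
    · exact Or.inr (Or.inr (Or.inl ⟨hz2, hz3, hAB⟩))
    have hmin := h _ (critPoint_nonneg hμ2.le hμ23.le hz2.le hz3.le hAB.le)
    rw [exp_neg_mul_critPoint (hr hz2 hz3), exp_neg_mul_critPoint (hr hz2 hz3)] at hmin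
    exact Or.inr (Or.inr (Or.inr ⟨hz2, hz3, hAB, hmin⟩))
  · rintro ⟨h1, h123, hcase⟩ s hs
    rcases hcase with hz2 | ⟨hz2, hz3⟩ | ⟨hz2, hz3, hAB⟩ | ⟨hz2, hz3, hAB, hmin⟩
    · exact three_exp_nonneg_of_vertices hμ2.le hμ23.le hs h1 (by linarith) h123
    · exact three_exp_nonneg_of_vertices hμ2.le hμ23.le hs h1 (by linarith) h123
    · linarith [three_exp_ge_at_zero hμ2 hμ23.le hz3.le hAB hs]
    · have := three_exp_critPoint_le hμ2 hμ23 hz3.le (hr hz2 hz3) s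
      rw [exp_neg_mul_critPoint (hr hz2 hz3), exp_neg_mul_critPoint (hr hz2 hz3)] at this
      linarith
end

section
/- Let f : ℝ^n → ℝ^n be continuous and let φ(t,x) denote the solution of x_{t+1} = f(x_t) from x, i.e., φ(0,x) = x and φ(t+1,x) = f(φ(t,x)). Let D ⊂ ℝ^n be compact, Ω ⊆ ℝ^n open, and S compact with S ⊂ Ω, and assume that for every x ∈ D there exists t ∈ ℕ such that φ(t,x) ∈ S. Then there exists t_0 ∈ ℕ such that τ(x,Ω) ≤ t_0 for every x ∈ D, where τ(x,Ω) := inf{t ∈ ℕ : φ(t,x) ∈ Ω} (with inf ∅ = ∞). -/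
/-- Uniform bound on the first hitting time of an open set `Ω` for the
discrete-time system `x_{t+1} = f(x_t)` with continuous `f`, over a compact set `D` of
initial conditions, when every solution from `D` reaches a compact set `S ⊆ Ω`.
(`∃ t ≤ t₀, f^[t] x ∈ Ω` says exactly that `τ(x,Ω) ≤ t₀`, with `inf ∅ = ∞`.) -/
theorem uniform_hitting_time_bound
    (n : ℕ) (f : EuclideanSpace ℝ (Fin n) → EuclideanSpace ℝ (Fin n))
    (hf : Continuous f)
    (D Ω S : Set (EuclideanSpace ℝ (Fin n)))
    (hD : IsCompact D) (hΩ : IsOpen Ω) (hS : IsCompact S) (hSΩ : S ⊆ Ω)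
    (hhit : ∀ x ∈ D, ∃ t : ℕ, f^[t] x ∈ S) :
    ∃ t0 : ℕ, ∀ x ∈ D, ∃ t : ℕ, t ≤ t0 ∧ f^[t] x ∈ Ω := by
  have hcover : D ⊆ ⋃ t : ℕ, (f^[t]) ⁻¹' Ω := by
    intro x hx
    obtain ⟨t, ht⟩ := hhit x hx
    exact Set.mem_iUnion.2 ⟨t, hSΩ ht⟩
  obtain ⟨F, hF⟩ := hD.elim_finite_subcover (fun t : ℕ => (f^[t]) ⁻¹' Ω)
    (fun t => hΩ.preimage (hf.iterate t)) hcover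
  classical
  refine ⟨F.sup id, fun x hx => ?_⟩
  obtain ⟨t, htF, htx⟩ := Set.mem_iUnion₂.1 (hF hx)
  exact ⟨t, Finset.le_sup (f := id) htF, htx⟩
end

section
/- Let f : ℝ^n → ℝ^n be continuous and positively homogeneous of degree 1, i.e., f(λx) = λf(x) for every x ∈ ℝ^n and every λ ∈ ℝ_+, and let φ(t,x) be the solution of x_{t+1} = f(x_t) from x. Then the following are equivalent: (i) the origin is globally attractive, i.e., φ(t,x) → 0 as t → ∞ for every x ∈ ℝ^n; (ii) the origin is globally exponentially stable, i.e., there exist c1 ≥ 1 and c2 > 0 such that |φ(t,x)| ≤ c1 e^{−c2 t}|x| for every x ∈ ℝ^n and every t ∈ ℕ. -/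
/-- For the discrete-time system `x_{t+1} = f(x_t)` with `f` continuous and
positively homogeneous of degree 1, global attractivity of the origin is equivalent to
global exponential stability of the origin. -/
theorem homogeneous_global_attractivity_iff_GES
    (n : ℕ) (f : EuclideanSpace ℝ (Fin n) → EuclideanSpace ℝ (Fin n))
    (hf : Continuous f)
    (hhom : ∀ lam : ℝ, 0 ≤ lam → ∀ x, f (lam • x) = lam • f x) :
    (∀ x, Filter.Tendsto (fun t : ℕ => f^[t] x) Filter.atTop (nhds 0)) ↔
      (∃ c1 c2 : ℝ, 1 ≤ c1 ∧ 0 < c2 ∧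
        ∀ x, ∀ t : ℕ, ‖f^[t] x‖ ≤ c1 * Real.exp (-c2 * t) * ‖x‖) := by
  have hf0 : f 0 = 0 := by
    have := hhom 0 le_rfl 0
    simpa using this
  have hiter0 : ∀ t : ℕ, f^[t] (0 : EuclideanSpace ℝ (Fin n)) = 0 :=
    fun t => Function.iterate_fixed hf0 t
  have hiterhom : ∀ t : ℕ, ∀ lam : ℝ, 0 ≤ lam → ∀ x, f^[t] (lam • x) = lam • f^[t] x := by
    intro t
    induction t with
    | zero => intro lam _ x; simp
    | succ t ih =>
      intro lam hlam x
      rw [Function.iterate_succ_apply, Function.iterate_succ_apply, hhom lam hlam, ih lam hlam]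
  constructor
  · intro hattr
    -- bound M on the sphere
    obtain ⟨C, hC⟩ := (isCompact_sphere (0 : EuclideanSpace ℝ (Fin n)) 1).exists_bound_of_continuousOn
      hf.continuousOn
    set M : ℝ := max C 1 with hMdef
    have hM1 : (1:ℝ) ≤ M := le_max_right _ _
    have hM0 : (0:ℝ) < M := lt_of_lt_of_le one_pos hM1
    have hunitnorm : ∀ x : EuclideanSpace ℝ (Fin n), x ≠ 0 → ‖(‖x‖⁻¹ • x)‖ = 1 := by
      intro x hx
      have : ‖x‖ ≠ 0 := norm_ne_zero_iff.mpr hx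
      rw [norm_smul, norm_inv, norm_norm, inv_mul_cancel₀ this]
    have hdecomp : ∀ (t : ℕ) (x : EuclideanSpace ℝ (Fin n)), x ≠ 0 →
        f^[t] x = ‖x‖ • f^[t] (‖x‖⁻¹ • x) := by
      intro t x hx
      have hn : ‖x‖ ≠ 0 := norm_ne_zero_iff.mpr hx
      have hxx : ‖x‖ • (‖x‖⁻¹ • x) = x := by
        rw [smul_smul, mul_inv_cancel₀ hn, one_smul]
      conv_lhs => rw [← hxx]
      rw [hiterhom t _ (norm_nonneg x)]
    have hlin : ∀ x : EuclideanSpace ℝ (Fin n), ‖f x‖ ≤ M * ‖x‖ := by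
      intro x
      by_cases hx : x = 0
      · simp [hx, hf0]
      · have hn : (0:ℝ) < ‖x‖ := norm_pos_iff.mpr hx
        have h1 := hdecomp 1 x hx
        simp only [Function.iterate_one] at h1
        rw [h1, norm_smul, norm_norm]
        have hmem : (‖x‖⁻¹ • x) ∈ Metric.sphere (0 : EuclideanSpace ℝ (Fin n)) 1 := by
          rw [mem_sphere_zero_iff_norm]; exact hunitnorm x hx
        have := hC _ hmem
        calc ‖x‖ * ‖f (‖x‖⁻¹ • x)‖ ≤ ‖x‖ * M :=
              mul_le_mul_of_nonneg_left (this.trans (le_max_left _ _)) hn.le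
          _ = M * ‖x‖ := mul_comm _ _
    have hiterlin : ∀ (t : ℕ) (x : EuclideanSpace ℝ (Fin n)), ‖f^[t] x‖ ≤ M ^ t * ‖x‖ := by
      intro t
      induction t with
      | zero => intro x; simp
      | succ t ih =>
        intro x
        rw [Function.iterate_succ_apply']
        calc ‖f (f^[t] x)‖ ≤ M * ‖f^[t] x‖ := hlin _
          _ ≤ M * (M ^ t * ‖x‖) := mul_le_mul_of_nonneg_left (ih x) hM0.le
          _ = M ^ (t+1) * ‖x‖ := by ring
    -- uniform contraction time via compactness
    have hexists : ∀ y : Metric.sphere (0 : EuclideanSpace ℝ (Fin n)) 1,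
        ∃ t : ℕ, ‖f^[t] (y : EuclideanSpace ℝ (Fin n))‖ < 1/2 := by
      intro y
      have := (hattr y).eventually (Metric.ball_mem_nhds (0 : EuclideanSpace ℝ (Fin n)) (by norm_num : (0:ℝ) < 1/2))
      obtain ⟨t, ht⟩ := this.exists
      exact ⟨t, by simpa [mem_ball_zero_iff] using ht⟩
    choose τ hτ using hexists
    have hopen : ∀ y : Metric.sphere (0 : EuclideanSpace ℝ (Fin n)) 1,
        IsOpen ((f^[τ y]) ⁻¹' Metric.ball (0 : EuclideanSpace ℝ (Fin n)) (1/2)) :=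
      fun y => Metric.isOpen_ball.preimage (hf.iterate _)
    have hcover : Metric.sphere (0 : EuclideanSpace ℝ (Fin n)) 1 ⊆
        ⋃ y : Metric.sphere (0 : EuclideanSpace ℝ (Fin n)) 1,
          (f^[τ y]) ⁻¹' Metric.ball (0 : EuclideanSpace ℝ (Fin n)) (1/2) := by
      intro x hx
      exact Set.mem_iUnion.mpr ⟨⟨x, hx⟩, by simpa [mem_ball_zero_iff] using hτ ⟨x, hx⟩⟩
    obtain ⟨s, hs⟩ := (isCompact_sphere (0 : EuclideanSpace ℝ (Fin n)) 1).elim_finite_subcover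
      _ hopen hcover
    set T : ℕ := s.sup τ + 1 with hTdef
    have hT1 : 1 ≤ T := Nat.le_add_left 1 _
    have key : ∀ x : EuclideanSpace ℝ (Fin n), ‖x‖ = 1 →
        ∃ t : ℕ, 1 ≤ t ∧ t ≤ T ∧ ‖f^[t] x‖ < 1/2 := by
      intro x hx
      have hxs : x ∈ Metric.sphere (0 : EuclideanSpace ℝ (Fin n)) 1 :=
        mem_sphere_zero_iff_norm.mpr hx
      obtain ⟨i, hi, hxi⟩ := Set.mem_iUnion₂.mp (hs hxs)
      have hball : ‖f^[τ i] x‖ < 1/2 := by simpa [mem_ball_zero_iff] using hxi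
      refine ⟨τ i, ?_, ?_, hball⟩
      · rcases Nat.eq_zero_or_pos (τ i) with h0 | h1
        · rw [h0] at hball; simp [hx] at hball; linarith
        · exact h1
      · exact le_trans (Finset.le_sup hi) (Nat.le_succ _)
    -- main estimate by strong induction
    have main : ∀ t : ℕ, ∀ x : EuclideanSpace ℝ (Fin n), ‖x‖ = 1 →
        ‖f^[t] x‖ ≤ M ^ T * (1/2 : ℝ) ^ (t / T) := by
      intro t
      induction t using Nat.strong_induction_on with
      | _ t ih =>
        intro x hx
        by_cases ht : t < T
        · have hdiv : t / T = 0 := Nat.div_eq_of_lt ht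
          rw [hdiv, pow_zero, mul_one]
          calc ‖f^[t] x‖ ≤ M ^ t * ‖x‖ := hiterlin t x
            _ = M ^ t := by rw [hx, mul_one]
            _ ≤ M ^ T := pow_le_pow_right₀ hM1 ht.le
        · push_neg at ht
          obtain ⟨u, hu1, huT, hu⟩ := key x hx
          set y := f^[u] x with hy
          have hcomp : f^[t] x = f^[t - u] y := by
            rw [hy, ← Function.iterate_add_apply]
            congr 1
            omega
          by_cases hy0 : y = 0
          · rw [hcomp, hy0, hiter0, norm_zero]
            positivity
          · have hyn : (0:ℝ) < ‖y‖ := norm_pos_iff.mpr hy0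
            have hunit : ‖(‖y‖⁻¹ • y)‖ = 1 := hunitnorm y hy0
            have hstep : f^[t] x = ‖y‖ • f^[t - u] (‖y‖⁻¹ • y) := by
              rw [hcomp, hdecomp (t - u) y hy0]
            have hless : t - u < t := by omega
            have ihb := ih (t - u) hless _ hunit
            have hMT : (0:ℝ) ≤ M ^ T := by positivity
            calc ‖f^[t] x‖ = ‖y‖ * ‖f^[t - u] (‖y‖⁻¹ • y)‖ := by
                  rw [hstep, norm_smul, norm_norm]
              _ ≤ (1/2) * (M ^ T * (1/2 : ℝ) ^ ((t - u) / T)) := by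
                  apply mul_le_mul hu.le ihb (norm_nonneg _) (by norm_num)
              _ = M ^ T * (1/2 : ℝ) ^ ((t - u) / T + 1) := by
                  rw [pow_succ]; ring
              _ ≤ M ^ T * (1/2 : ℝ) ^ (t / T) := by
                  refine mul_le_mul_of_nonneg_left ?_ hMT
                  refine pow_le_pow_of_le_one (by norm_num) (by norm_num) ?_
                  have h1 : t ≤ (t - u) + T := by omega
                  calc t / T ≤ ((t - u) + T) / T := Nat.div_le_div_right h1
                    _ = (t - u) / T + 1 := Nat.add_div_right _ (by omega)
    -- convert to exponential bound
    set c2 : ℝ := Real.log 2 / T with hc2def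
    have hTpos : (0:ℝ) < (T:ℝ) := by exact_mod_cast hT1
    have hlog2 : (0:ℝ) < Real.log 2 := Real.log_pos (by norm_num)
    have hc2 : 0 < c2 := div_pos hlog2 hTpos
    have hlogeq : Real.log 2 = c2 * T := by
      rw [hc2def, div_mul_cancel₀ _ hTpos.ne']
    refine ⟨2 * M ^ T, c2, ?_, hc2, ?_⟩
    · have : (1:ℝ) ≤ M ^ T := one_le_pow₀ hM1
      linarith
    · intro x t
      have hhalfexp : (1/2 : ℝ) ^ (t / T) ≤ 2 * Real.exp (-c2 * t) := by
        have hk : (t:ℝ) < T * (t / T : ℕ) + T := by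
          have h1 := Nat.div_add_mod t T
          have h2 := Nat.mod_lt t (by omega : 0 < T)
          have h3 : t < T * (t / T) + T := by omega
          exact_mod_cast h3
        have hpow : (1/2 : ℝ) ^ (t / T) = Real.exp (((t / T : ℕ) : ℝ) * (-Real.log 2)) := by
          rw [Real.exp_nat_mul, Real.exp_neg, Real.exp_log (by norm_num : (0:ℝ) < 2)]
          norm_num
        have hineq : c2 * t ≤ c2 * ((T:ℝ) * (t / T : ℕ) + T) :=
          mul_le_mul_of_nonneg_left hk.le hc2.le
        have hexp : ((t / T : ℕ) : ℝ) * (-Real.log 2) ≤ Real.log 2 + (-c2 * t) := by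
          rw [hlogeq]
          nlinarith [hineq]
        calc (1/2 : ℝ) ^ (t / T) = Real.exp (((t / T : ℕ) : ℝ) * (-Real.log 2)) := hpow
          _ ≤ Real.exp (Real.log 2 + (-c2 * t)) := Real.exp_le_exp.mpr hexp
          _ = 2 * Real.exp (-c2 * t) := by
              rw [Real.exp_add, Real.exp_log (by norm_num : (0:ℝ) < 2)]
      by_cases hx : x = 0
      · simp [hx, hiter0]
      · have hn : (0:ℝ) < ‖x‖ := norm_pos_iff.mpr hx
        have h1 := hdecomp t x hx
        have h2 := main t _ (hunitnorm x hx)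
        have hMT : (0:ℝ) ≤ M ^ T := by positivity
        calc ‖f^[t] x‖ = ‖x‖ * ‖f^[t] (‖x‖⁻¹ • x)‖ := by rw [h1, norm_smul, norm_norm]
          _ ≤ ‖x‖ * (M ^ T * (1/2 : ℝ) ^ (t / T)) := mul_le_mul_of_nonneg_left h2 hn.le
          _ ≤ ‖x‖ * (M ^ T * (2 * Real.exp (-c2 * t))) := by
              apply mul_le_mul_of_nonneg_left (mul_le_mul_of_nonneg_left hhalfexp hMT) hn.le
          _ = 2 * M ^ T * Real.exp (-c2 * t) * ‖x‖ := by ring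
  · rintro ⟨c1, c2, hc1, hc2, hb⟩ x
    rw [tendsto_zero_iff_norm_tendsto_zero]
    apply squeeze_zero (fun t => norm_nonneg _) (fun t => hb x t)
    have heq : ∀ t : ℕ, c1 * Real.exp (-c2 * t) * ‖x‖ = c1 * Real.exp (-c2) ^ t * ‖x‖ := by
      intro t
      rw [← Real.exp_nat_mul]
      ring_nf
    simp only [heq]
    have h1 : Filter.Tendsto (fun t : ℕ => Real.exp (-c2) ^ t) Filter.atTop (nhds 0) := by
      apply tendsto_pow_atTop_nhds_zero_of_lt_one (Real.exp_nonneg _)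
      rw [Real.exp_lt_one_iff]
      linarith
    have := (h1.const_mul c1).mul_const ‖x‖
    simpa using this
end
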